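/- Let V be a graded vector space and T(V) = ⊕_{n≥1} V^{⊗n} the non-unital tensor algebra. For f ∈ (V*)^{⊗k} ⊗ T(V), viewed via the natural pairing as a map ι(f) : V^{⊗k} → T(V), define ρ(f) ∈ End(T(V)) by ρ(f)|_{V^{⊗n}} = Σ_{i+j+m=n, j=k} id^{⊗i} ⊗ ι(f) ⊗ id^{⊗m}. Then ρ(f) is a differential operator of noncommutative order at most k, i.e., the Börjeson product b_{k+1}^{ρ(f)} on the algebra T(V) vanishes identically. -/

import Mathlib

/-- Product of a nonempty list of elements of a ring, junk value `0` on `[]`. -/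
def listProd {A : Type*} [Ring A] : List A → A
  | [] => 0
  | a :: t => t.foldl (· * ·) a

/-- The Börjeson products `b_n^D` as a function of the list `(a₁,…,aₙ)` of arguments
(`b₁^D = D`); signs are trivial here. -/
def borL {A : Type*} [Ring A] (D : A → A) : List A → A
  | [] => 0
  | [a] => D a
  | a1 :: b :: t =>
      D (listProd (a1 :: b :: t))
        - D (listProd ((a1 :: b :: t).dropLast)) * ((b :: t).getLast (List.cons_ne_nil b t))
        - a1 * D (listProd (b :: t))
        + a1 * D (listProd ((b :: t).dropLast)) * ((b :: t).getLast (List.cons_ne_nil b t))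

/-! On a product of generators, `D` is the sum over all windows of `k` consecutive factors
to which `φ` is applied. For `a, b, c` products of `p, q, r` generators, inclusion–exclusion
in `D(abc) − D(ab)c − aD(bc) + aD(b)c` leaves exactly the windows that start inside `a` and end
inside `c`; such a window covers all `q` factors of `b` and at least two more, so there is none
once `q ≥ k − 1`. Since `b_{k+1}^D(a₁, …, a_{k+1}) = b_3^D(a₁, a₂⋯a_k, a_{k+1})` and the middle
argument is a combination of products of at least `k − 1` generators, trilinearity of `b_3^D`
finishes the proof. -/

open Finset

section Borjeson

variable {A : Type*} [Ring A]

theorem listProd_cons (a : A) (t : List A) : listProd (a :: t) = (a :: t).prod := by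
  rw [listProd, List.prod_cons, List.prod_eq_foldl, ← mul_one a, List.foldl_assoc, mul_one]

theorem borL_triple (D : A → A) (a b c : A) :
    borL D [a, b, c] = D (a * b * c) - D (a * b) * c - a * D (b * c) + a * D b * c :=
  rfl

-- `listProd [] = 0` rather than `1`, so for `l = []` the left side involves `D 0` where
-- `b_3^D(a, 1, c)` involves `D 1`.
theorem borL_cons_append_singleton (D : A → A) (hD : D 0 = D 1) (a c : A) (l : List A) :
    borL D (a :: (l ++ [c])) = borL D [a, l.prod, c] := by
  rcases l with _ | ⟨b, t⟩
  · simp [borL, listProd, hD]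
  · have hdrop : (b :: (t ++ [c])).dropLast = b :: t := List.dropLast_concat (l₁ := b :: t)
    rw [borL_triple, List.cons_append, borL]
    simp [hdrop, listProd_cons, mul_assoc]

open LinearMap in
theorem borL_triple_eq_zero_of_mem_span {R : Type*} [CommRing R] [Algebra R A] (D : A →ₗ[R] A)
    {s t u : Set A} (h : ∀ a ∈ s, ∀ b ∈ t, ∀ c ∈ u, borL D [a, b, c] = 0)
    {a b c : A} (ha : a ∈ Submodule.span R s) (hb : b ∈ Submodule.span R t)
    (hc : c ∈ Submodule.span R u) : borL D [a, b, c] = 0 := by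
  have of_linear (g : A → A) (f : A →ₗ[R] A) (hfg : ⇑f = g) (S : Set A) (hS : ∀ x ∈ S, g x = 0) :
      ∀ x ∈ Submodule.span R S, g x = 0 := by
    subst hfg
    exact fun x hx => eqOn_span' (g := 0) hS hx
  have slot_a (b c : A) := of_linear (fun a => borL D [a, b, c])
    (D ∘ₗ mulRight R (b * c) - mulRight R c ∘ₗ D ∘ₗ mulRight R b - mulRight R (D (b * c))
      + mulRight R (D b * c)) (by ext; simp [borL_triple, mul_assoc])
  have slot_b (a c : A) := of_linear (fun b => borL D [a, b, c])
    (D ∘ₗ mulLeft R a ∘ₗ mulRight R c - mulRight R c ∘ₗ D ∘ₗ mulLeft R a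
      - mulLeft R a ∘ₗ D ∘ₗ mulRight R c + mulLeft R a ∘ₗ mulRight R c ∘ₗ D)
    (by ext; simp [borL_triple, mul_assoc])
  have slot_c (a b : A) := of_linear (fun c => borL D [a, b, c])
    (D ∘ₗ mulLeft R (a * b) - mulLeft R (D (a * b)) - mulLeft R a ∘ₗ D ∘ₗ mulLeft R b
      + mulLeft R (a * D b)) (by ext; simp [borL_triple, mul_assoc])
  exact slot_a b c s
    (fun a ha => slot_b a c t (fun b hb => slot_c a b u (h a ha b hb) c hc) b hb) a ha

end Borjeson

def seqAppend {α : Type*} (n : ℕ) (v w : ℕ → α) : ℕ → α := fun j => if j < n then v j else w (j - n)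

theorem seqAppend_add {α : Type*} (n j : ℕ) (v w : ℕ → α) : seqAppend n v w (n + j) = w j := by
  simp [seqAppend]

section TensorAlgebra

variable (R : Type*) {V : Type*} [CommRing R] [AddCommMonoid V] [Module R V]

def genProd (n : ℕ) (v : ℕ → V) : TensorAlgebra R V :=
  ((List.range n).map fun j => TensorAlgebra.ι R (v j)).prod

variable {R}

theorem genProd_zero (v : ℕ → V) : genProd R 0 v = 1 := rfl

theorem genProd_congr {n : ℕ} {v w : ℕ → V} (h : ∀ j < n, v j = w j) :
    genProd R n v = genProd R n w := by
  unfold genProd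
  congr 1
  exact List.map_congr_left fun j hj => by rw [h j (List.mem_range.mp hj)]

theorem genProd_add (m n : ℕ) (v : ℕ → V) :
    genProd R (m + n) v = genProd R m v * genProd R n (fun j => v (m + j)) := by
  rw [genProd, List.range_add, List.map_append, List.prod_append, List.map_map]
  rfl

theorem prod_map_drop_range (n d : ℕ) (v : ℕ → V) :
    (((List.range n).drop d).map fun j => TensorAlgebra.ι R (v j)).prod
      = genProd R (n - d) (fun j => v (d + j)) := by
  rw [List.range_eq_range', List.drop_range', List.range'_eq_map_range, List.map_map]
  simp only [zero_add, mul_one]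
  rfl

theorem genProd_seqAppend_left (n : ℕ) (v w : ℕ → V) :
    genProd R n (seqAppend n v w) = genProd R n v :=
  genProd_congr fun _ hj => if_pos hj

theorem genProd_mul (m n : ℕ) (v w : ℕ → V) :
    genProd R m v * genProd R n w = genProd R (m + n) (seqAppend m v w) := by
  simp only [genProd_add, genProd_seqAppend_left, seqAppend_add]

variable (R) in
def genProdsGE (m : ℕ) : Set (TensorAlgebra R V) := {y | ∃ n v, m ≤ n ∧ y = genProd R n v}

theorem mul_mem_span_genProdsGE {m n : ℕ} {x y : TensorAlgebra R V}
    (hx : x ∈ Submodule.span R (genProdsGE R m)) (hy : y ∈ Submodule.span R (genProdsGE R n)) :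
    x * y ∈ Submodule.span R (genProdsGE R (m + n)) := by
  suffices h : Submodule.span R (genProdsGE R m) * Submodule.span R (genProdsGE R n)
      ≤ Submodule.span R (genProdsGE R (m + n)) from h (Submodule.mul_mem_mul hx hy)
  rw [Submodule.span_mul_span]
  refine Submodule.span_mono ?_
  rintro _ ⟨_, ⟨m', v, hm, rfl⟩, _, ⟨n', w, hn, rfl⟩, rfl⟩
  exact ⟨m' + n', _, by omega, genProd_mul m' n' v w⟩

theorem list_prod_mem_span_genProdsGE (l : List (TensorAlgebra R V))
    (h : ∀ x ∈ l, x ∈ Submodule.span R (genProdsGE R 1)) :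
    l.prod ∈ Submodule.span R (genProdsGE R l.length) := by
  induction l with
  | nil => exact Submodule.subset_span ⟨0, 0, le_rfl, rfl⟩
  | cons a t ih =>
    rw [List.prod_cons, List.length_cons, add_comm]
    exact mul_mem_span_genProdsGE (h a List.mem_cons_self)
      (ih fun x hx => h x (List.mem_cons_of_mem a hx))

theorem span_genProdsGE_zero : Submodule.span R (genProdsGE R 0 : Set (TensorAlgebra R V)) = ⊤ := by
  refine Submodule.eq_top_iff'.mpr fun x => ?_
  induction x using TensorAlgebra.induction with
  | algebraMap r =>
    rw [Algebra.algebraMap_eq_smul_one]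
    exact Submodule.smul_mem _ r (Submodule.subset_span ⟨0, 0, le_rfl, rfl⟩)
  | ι v => exact Submodule.subset_span ⟨1, fun _ => v, zero_le_one, by simp [genProd]⟩
  | mul a b ha hb => exact mul_mem_span_genProdsGE (m := 0) (n := 0) ha hb
  | add a b ha hb => exact add_mem ha hb

end TensorAlgebra

section Windows

variable {R V : Type*} [CommRing R] [AddCommMonoid V] [Module R V] {k : ℕ}
  (φ : (Fin k → V) → TensorAlgebra R V)

def windowTerm (n : ℕ) (v : ℕ → V) (i : ℕ) : TensorAlgebra R V :=
  genProd R i v * φ (fun t => v (i + t)) * genProd R (n - (i + k)) (fun j => v (i + k + j))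

-- `D = ρ(φ) = Σ id^{⊗i} ⊗ φ ⊗ id^{⊗m}` on products of generators.
def IsWindowOperator (D : TensorAlgebra R V → TensorAlgebra R V) : Prop :=
  ∀ n v, D (genProd R n v) = ∑ i ∈ range (n + 1 - k), windowTerm φ n v i

theorem genProd_mul_windowTerm (p n i : ℕ) (u : ℕ → V) :
    genProd R p u * windowTerm φ n (fun j => u (p + j)) i = windowTerm φ (p + n) u (p + i) := by
  simp only [windowTerm, ← mul_assoc, ← genProd_add, add_assoc]
  congr 2
  omega

theorem windowTerm_mul_genProd {n i : ℕ} (h : i + k ≤ n) (r : ℕ) (u : ℕ → V) :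
    windowTerm φ n u i * genProd R r (fun j => u (n + j)) = windowTerm φ (n + r) u i := by
  obtain ⟨m, rfl⟩ := Nat.exists_eq_add_of_le h
  rw [windowTerm, windowTerm, Nat.add_sub_cancel_left,
    show i + k + m + r - (i + k) = m + r by omega, genProd_add m r, mul_assoc]
  simp only [add_assoc]

theorem isWindowOperator_iff (D : TensorAlgebra R V → TensorAlgebra R V) :
    IsWindowOperator φ D ↔ ∀ (n : ℕ) (v : ℕ → V),
      D (((List.range n).map fun j => TensorAlgebra.ι R (v j)).prod)
        = ∑ i ∈ (range (n + 1)).filter (fun i => i + k ≤ n),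
            ((List.range i).map fun j => TensorAlgebra.ι R (v j)).prod
              * φ (fun t : Fin k => v (i + (t : ℕ)))
              * (((List.range n).drop (i + k)).map fun j => TensorAlgebra.ι R (v j)).prod := by
  refine forall₂_congr fun n v => ?_
  have hwindows : (range (n + 1)).filter (fun i => i + k ≤ n) = range (n + 1 - k) := by
    ext
    simp only [mem_filter, mem_range]
    omega
  simp only [prod_map_drop_range, hwindows]
  rfl

variable {φ}

theorem IsWindowOperator.map_one {D : TensorAlgebra R V → TensorAlgebra R V}
    (hD : IsWindowOperator φ D) (hk : 1 ≤ k) : D 1 = 0 := by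
  simpa [genProd_zero, Nat.sub_eq_zero_of_le hk] using hD 0 0

theorem IsWindowOperator.borL_genProd_eq_zero {D : TensorAlgebra R V → TensorAlgebra R V}
    (hD : IsWindowOperator φ D) {p q r : ℕ} (hq : k ≤ q + 1) (u : ℕ → V) :
    borL D [genProd R p u, genProd R q (fun j => u (p + j)), genProd R r (fun j => u (p + q + j))]
      = 0 := by
  set w := windowTerm φ (p + q + r) u
  have h1 : D (genProd R (p + q + r) u)
      = ∑ i ∈ range p, w i + ∑ i ∈ range (q + r + 1 - k), w (p + i) := by
    rw [hD, ← sum_range_add]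
    congr 2
    omega
  have h2 : D (genProd R (p + q) u) * genProd R r (fun j => u (p + q + j))
      = ∑ i ∈ range p, w i + ∑ i ∈ range (q + 1 - k), w (p + i) := by
    rw [hD, sum_mul, ← sum_range_add, show p + (q + 1 - k) = p + q + 1 - k by omega]
    exact sum_congr rfl fun i hi => windowTerm_mul_genProd φ (by simp at hi; omega) r u
  have h3 : genProd R p u * D (genProd R (q + r) (fun j => u (p + j)))
      = ∑ i ∈ range (q + r + 1 - k), w (p + i) := by
    rw [hD, mul_sum]
    exact sum_congr rfl fun i _ => by rw [genProd_mul_windowTerm, ← add_assoc]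
  have h4 : genProd R p u * D (genProd R q (fun j => u (p + j)))
        * genProd R r (fun j => u (p + q + j))
      = ∑ i ∈ range (q + 1 - k), w (p + i) := by
    rw [hD, mul_sum, sum_mul]
    refine sum_congr rfl fun i hi => ?_
    rw [genProd_mul_windowTerm, windowTerm_mul_genProd φ (by simp at hi; omega)]
  have hpq : genProd R p u * genProd R q (fun j => u (p + j)) = genProd R (p + q) u :=
    (genProd_add p q u).symm
  have hqr : genProd R q (fun j => u (p + j)) * genProd R r (fun j => u (p + q + j))
      = genProd R (q + r) (fun j => u (p + j)) := by
    simp only [genProd_add, add_assoc]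
  rw [borL_triple, hpq, ← genProd_add, hqr, h1, h2, h3, h4]
  abel

theorem IsWindowOperator.borL_eq_zero {D : TensorAlgebra R V →ₗ[R] TensorAlgebra R V}
    (hD : IsWindowOperator φ D) {b : TensorAlgebra R V}
    (hb : b ∈ Submodule.span R (genProdsGE R (k - 1))) (a c : TensorAlgebra R V) :
    borL D [a, b, c] = 0 := by
  have htop (x : TensorAlgebra R V) : x ∈ Submodule.span R (genProdsGE R 0) := by
    rw [span_genProdsGE_zero]
    exact Submodule.mem_top
  refine borL_triple_eq_zero_of_mem_span D ?_ (htop a) hb (htop c)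
  rintro _ ⟨p, va, -, rfl⟩ _ ⟨q, vb, hq, rfl⟩ _ ⟨r, vc, -, rfl⟩
  simpa only [genProd_seqAppend_left, seqAppend_add, add_assoc] using
    hD.borL_genProd_eq_zero (p := p) (q := q) (r := r) (by omega)
      (seqAppend p va (seqAppend q vb vc))

end Windows

/-- Let `T(V) = ⊕_{n≥1} V^{⊗n}` be the non-unital tensor algebra, realized here as the
augmentation submodule (spanned by products of `n ≥ 1` generators) of `TensorAlgebra R V`.
For `f ∈ (V*)^{⊗k} ⊗ T(V)`, i.e. a `k`-multilinear map `φ : V^k → T(V)`, the operator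
`ρ(f) = Σ_{i+k+m=n} id^{⊗i} ⊗ ι(f) ⊗ id^{⊗m}` (a linear operator `D` acting on products
of generators by the window-sum formula) is a differential operator of noncommutative
order at most `k`: the Börjeson product `b_{k+1}^{ρ(f)}` vanishes identically on `T(V)`. -/
theorem stmt12 {R V : Type*} [CommRing R] [AddCommGroup V] [Module R V]
    (k : ℕ) (hk : 1 ≤ k)
    (φ : MultilinearMap R (fun _ : Fin k => V) (TensorAlgebra R V))
    (D : TensorAlgebra R V →ₗ[R] TensorAlgebra R V)
    (hD : ∀ (n : ℕ) (v : ℕ → V),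
      D (((List.range n).map fun j => TensorAlgebra.ι R (v j)).prod)
        = ∑ i ∈ (Finset.range (n + 1)).filter (fun i => i + k ≤ n),
            ((List.range i).map fun j => TensorAlgebra.ι R (v j)).prod
              * φ (fun t : Fin k => v (i + (t : ℕ)))
              * (((List.range n).drop (i + k)).map fun j => TensorAlgebra.ι R (v j)).prod)
    (as : List (TensorAlgebra R V)) (hlen : as.length = k + 1)
    (hmem : ∀ x ∈ as, x ∈ Submodule.span R
      {y : TensorAlgebra R V | ∃ (n : ℕ) (v : ℕ → V), 1 ≤ n ∧
        y = ((List.range n).map fun j => TensorAlgebra.ι R (v j)).prod}) :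
    borL (⇑D) as = 0 := by
  have hW : IsWindowOperator φ D := (isWindowOperator_iff φ D).mpr hD
  obtain ⟨a, l, c, rfl⟩ : ∃ a l c, as = a :: (l ++ [c]) := by
    rcases as with _ | ⟨a, _ | ⟨b, t⟩⟩
    · simp at hlen
    · simp at hlen; omega
    · obtain ⟨l, c, hl⟩ := (b :: t).eq_nil_or_concat'.resolve_left (List.cons_ne_nil b t)
      exact ⟨a, l, c, by rw [hl]⟩
  have hl : l.length = k - 1 := by
    simp only [List.length_cons, List.length_append, List.length_nil] at hlen
    omega
  rw [borL_cons_append_singleton _ (by rw [map_zero, hW.map_one hk])]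
  refine hW.borL_eq_zero (hl ▸ list_prod_mem_span_genProdsGE l fun x hx => ?_) a c
  exact hmem x (List.mem_cons_of_mem a (List.mem_append_left _ hx))
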